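/- Let q ≥ 1 and let Σ = {x_1, …, x_q}. The set S = ⋃_{i=1}^q {x_i², x_i³} ∪ ⋃_{i ≠ j} {x_i x_j} over Σ has cardinality q² + q, its shortest words have length 2, and its iterated shuffle S^† is co-finite. -/

import Mathlib

/-- `Shuffle u v w` means that the word `w` is an interleaving (shuffle) of the
words `u` and `v`. -/
inductive Shuffle {α : Type*} : List α → List α → List α → Prop
  | nil : Shuffle [] [] []
  | left {a : α} {u v w : List α} : Shuffle u v w → Shuffle (a :: u) v (a :: w)
  | right {a : α} {u v w : List α} : Shuffle u v w → Shuffle u (a :: v) (a :: w)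

/-- `IterShuffle S y` means `y` belongs to the iterated shuffle `S^†`, i.e. `y`
can be obtained by shuffling together finitely many (possibly zero) words of `S`. -/
inductive IterShuffle {α : Type*} (S : Set (List α)) : List α → Prop
  | nil : IterShuffle S []
  | step {u w y : List α} : u ∈ S → IterShuffle S w → Shuffle u w y → IterShuffle S y

/-!
Every word of even length is a concatenation of two-letter words, all of which lie in `S`. A word
of odd length greater than `2q` contains some letter at least three times by pigeonhole; shuffling
that cube into a word of even length recovers it, so it also lies in `S^†`. Hence only words of
length at most `2q` can lie outside `S^†`.
-/

namespace Shuffle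

variable {α : Type*}

theorem nil_left : ∀ v : List α, Shuffle [] v v
  | [] => nil
  | _ :: v => right (nil_left v)

theorem length_eq {u v w : List α} (h : Shuffle u v w) : w.length = u.length + v.length := by
  induction h <;> simp only [List.length_cons, List.length_nil] at * <;> omega

theorem exists_of_sublist {u w : List α} (h : u.Sublist w) : ∃ v, Shuffle u v w := by
  induction h with
  | slnil => exact ⟨[], nil⟩
  | cons a _ ih =>
    obtain ⟨v, hv⟩ := ih
    exact ⟨a :: v, right hv⟩
  | cons_cons a _ ih =>
    obtain ⟨v, hv⟩ := ih
    exact ⟨v, left hv⟩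

end Shuffle

theorem List.exists_lt_count_of_card_mul_lt_length {α : Type*} [Fintype α] [DecidableEq α]
    {w : List α} {n : ℕ} (h : Fintype.card α * n < w.length) : ∃ a, n < w.count a := by
  have hsum : ∑ a, w.count a = w.length := by
    simpa using Multiset.sum_count_eq_card (s := Finset.univ) (m := (w : Multiset α))
      (fun a _ => Finset.mem_univ a)
  obtain ⟨a, -, ha⟩ := Finset.exists_lt_of_sum_lt (s := Finset.univ) (f := fun _ => n)
    (g := fun a => w.count a) (by simpa [hsum, mul_comm] using h)
  exact ⟨a, ha⟩

namespace IterShuffle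

variable {α : Type*} {S : Set (List α)}

theorem of_even_length (hpair : ∀ a b : α, [a, b] ∈ S) :
    ∀ w : List α, Even w.length → IterShuffle S w
  | [], _ => nil
  | [_], h => by simp at h
  | a :: b :: w, h =>
    step (hpair a b) (of_even_length hpair w (by simpa [Nat.even_add_one] using h))
      (.left (.left (Shuffle.nil_left w)))

theorem of_two_mul_card_lt_length [Fintype α] (hpair : ∀ a b : α, [a, b] ∈ S)
    (hcube : ∀ a : α, [a, a, a] ∈ S) {w : List α} (hw : 2 * Fintype.card α < w.length) :
    IterShuffle S w := by
  classical
  rcases Nat.even_or_odd w.length with heven | hodd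
  · exact of_even_length hpair w heven
  obtain ⟨a, ha⟩ := w.exists_lt_count_of_card_mul_lt_length (n := 2) (by omega)
  obtain ⟨v, hv⟩ := Shuffle.exists_of_sublist (List.replicate_sublist_iff.mpr ha)
  rw [hv.length_eq, List.length_replicate] at hodd
  have hveven : Even v.length := (Nat.odd_add.mp hodd).mp (by decide)
  exact step (hcube a) (of_even_length hpair v hveven) hv

theorem finite_setOf_not [Fintype α] (hpair : ∀ a b : α, [a, b] ∈ S)
    (hcube : ∀ a : α, [a, a, a] ∈ S) : {w : List α | ¬ IterShuffle S w}.Finite :=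
  (List.finite_length_le α (2 * Fintype.card α)).subset fun _ hw =>
    not_lt.mp fun hlt => hw (of_two_mul_card_lt_length hpair hcube hlt)

end IterShuffle

def squaresCubesAndPairs (α : Type*) : Set (List α) :=
  {w | ∃ i : α, w = List.replicate 2 i ∨ w = List.replicate 3 i} ∪
    {w | ∃ i j : α, i ≠ j ∧ w = [i, j]}

section squaresCubesAndPairs

variable {α : Type*}

theorem pair_mem_squaresCubesAndPairs (a b : α) : [a, b] ∈ squaresCubesAndPairs α := by
  by_cases hab : a = b
  · exact .inl ⟨a, .inl (by simp [hab])⟩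
  · exact .inr ⟨a, b, hab, rfl⟩

theorem cube_mem_squaresCubesAndPairs (a : α) : [a, a, a] ∈ squaresCubesAndPairs α :=
  .inl ⟨a, .inr (by simp [List.replicate])⟩

theorem two_le_length_of_mem_squaresCubesAndPairs {w : List α}
    (hw : w ∈ squaresCubesAndPairs α) : 2 ≤ w.length := by
  rcases hw with ⟨i, rfl | rfl⟩ | ⟨i, j, -, rfl⟩ <;> simp

theorem squaresCubesAndPairs_eq_range_union_range :
    squaresCubesAndPairs α =
      Set.range (fun p : α × α => [p.1, p.2]) ∪ Set.range (fun a : α => [a, a, a]) := by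
  ext w
  constructor
  · rintro (⟨i, rfl | rfl⟩ | ⟨i, j, -, rfl⟩)
    · exact .inl ⟨(i, i), by simp⟩
    · exact .inr ⟨i, by simp [List.replicate]⟩
    · exact .inl ⟨(i, j), rfl⟩
  · rintro (⟨⟨a, b⟩, rfl⟩ | ⟨a, rfl⟩)
    · exact pair_mem_squaresCubesAndPairs a b
    · exact cube_mem_squaresCubesAndPairs a

theorem ncard_squaresCubesAndPairs [Fintype α] :
    (squaresCubesAndPairs α).ncard = Fintype.card α ^ 2 + Fintype.card α := by
  have hdisj :
      Disjoint (Set.range fun p : α × α => [p.1, p.2]) (Set.range fun a : α => [a, a, a]) :=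
    Set.disjoint_left.mpr <| by rintro _ ⟨p, rfl⟩ ⟨a, h⟩; simp at h
  rw [squaresCubesAndPairs_eq_range_union_range, Set.ncard_union_eq hdisj,
    Set.ncard_range_of_injective (fun p p' h => by simpa [Prod.ext_iff] using h),
    Set.ncard_range_of_injective (fun a a' h => by simpa using h)]
  simp [sq]

end squaresCubesAndPairs

/-- The set `S = ⋃ᵢ {xᵢ², xᵢ³} ∪ ⋃_{i ≠ j} {xᵢxⱼ}` over a `q`-letter alphabet
(`q ≥ 1`) has cardinality `q² + q`, its shortest words have length `2`, and its
iterated shuffle is co-finite. -/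
theorem proto_m_two_tight (q : ℕ) (hq : 1 ≤ q)
    (S : Set (List (Fin q)))
    (hS : S = {w | ∃ i : Fin q, w = List.replicate 2 i ∨ w = List.replicate 3 i} ∪
              {w | ∃ i j : Fin q, i ≠ j ∧ w = [i, j]}) :
    S.ncard = q ^ 2 + q ∧
    (∃ w ∈ S, w.length = 2) ∧ (∀ w ∈ S, 2 ≤ w.length) ∧
    {w : List (Fin q) | ¬ IterShuffle S w}.Finite := by
  change S = squaresCubesAndPairs (Fin q) at hS
  subst hS
  refine ⟨?_, ?_, fun _ => two_le_length_of_mem_squaresCubesAndPairs, ?_⟩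
  · simpa using ncard_squaresCubesAndPairs (α := Fin q)
  · let i : Fin q := ⟨0, hq⟩
    exact ⟨[i, i], pair_mem_squaresCubesAndPairs i i, rfl⟩
  · exact IterShuffle.finite_setOf_not pair_mem_squaresCubesAndPairs cube_mem_squaresCubesAndPairs
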